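/- arXiv:1603.06518 — 3 statements merged into one kernel-verified Lean document; each statement's English description precedes it below -/
import Mathlib

section
/- The Jacobi theta identity holds: Θ₀₁(z)⁴ + Θ₁₀(z)⁴ = Θ₀₀(z)⁴ for all z in the upper half plane. -/
/-!
Write `thetaChar c z = ∑ₙ exp(πi (n + c)² z)`, so that `Θ₀₀ = thetaChar 0`,
`Θ₁₀ = thetaChar (1/2)` and `Θ₀₁(z) = Θ₀₀(z + 1)`. Splitting the double series of
`thetaChar c z * thetaChar d z` according to the parity of `m + n` and substituting
`(m, n) = (a + b, a - b)` or `(a + b + 1, a - b)` turns `(m + c)² + (n + d)²` into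
`2 (a + (c+d)/2)² + 2 (b + (c-d)/2)²`, which gives duplication formulas. With `X = Θ₀₀(2z)` and
`Y = Θ₁₀(2z)` they read `Θ₀₀² = X² + Y²`, `Θ₀₁² = X² - Y²`, `Θ₁₀² = 2XY`, and Jacobi's identity
is `(X² - Y²)² + (2XY)² = (X² + Y²)²`.
-/

open Complex Real

noncomputable def addSubParityEquiv : (ℤ × ℤ) ⊕ (ℤ × ℤ) ≃ ℤ × ℤ :=
  Equiv.ofBijective
    (Sum.elim (fun p => (p.1 + p.2, p.1 - p.2)) (fun p => (p.1 + p.2 + 1, p.1 - p.2)))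
    ⟨by
      rintro (⟨a, b⟩ | ⟨a, b⟩) (⟨a', b'⟩ | ⟨a', b'⟩) h <;>
        simp only [Sum.elim_inl, Sum.elim_inr, Prod.mk.injEq, Sum.inl.injEq, Sum.inr.injEq,
          reduceCtorEq] at h ⊢ <;>
        omega,
     by
      rintro ⟨m, n⟩
      rcases Int.even_or_odd (m + n) with ⟨k, hk⟩ | ⟨k, hk⟩
      · exact ⟨.inl (k, m - k), by simp only [Sum.elim_inl, Prod.mk.injEq]; omega⟩
      · exact ⟨.inr (k, m - k - 1), by simp only [Sum.elim_inr, Prod.mk.injEq]; omega⟩⟩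

lemma HasSum.of_parity_split {M : Type*} [AddCommMonoid M] [TopologicalSpace M]
    [ContinuousAdd M] {F : ℤ × ℤ → M} {a b : M}
    (ha : HasSum (fun p : ℤ × ℤ => F (p.1 + p.2, p.1 - p.2)) a)
    (hb : HasSum (fun p : ℤ × ℤ => F (p.1 + p.2 + 1, p.1 - p.2)) b) : HasSum F (a + b) :=
  addSubParityEquiv.hasSum_iff.mp (ha.sum hb)

noncomputable def thetaCharTerm (c z : ℂ) (n : ℤ) : ℂ := cexp (π * I * ((n : ℂ) + c) ^ 2 * z)

noncomputable def thetaChar (c z : ℂ) : ℂ := ∑' n : ℤ, thetaCharTerm c z n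

lemma thetaCharTerm_eq_mul_jacobiTheta₂_term (c z : ℂ) (n : ℤ) :
    thetaCharTerm c z n = cexp (π * I * c ^ 2 * z) * jacobiTheta₂_term n (c * z) z := by
  rw [thetaCharTerm, jacobiTheta₂_term, ← Complex.exp_add]
  ring_nf

lemma summable_thetaCharTerm (c : ℂ) {z : ℂ} (hz : 0 < z.im) :
    Summable (thetaCharTerm c z) :=
  (((summable_jacobiTheta₂_term_iff (c * z) z).mpr hz).mul_left _).congr fun n =>
    (thetaCharTerm_eq_mul_jacobiTheta₂_term c z n).symm

lemma hasSum_thetaCharTerm_mul_thetaCharTerm (c d : ℂ) {z : ℂ} (hz : 0 < z.im) :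
    HasSum (fun p : ℤ × ℤ => thetaCharTerm c z p.1 * thetaCharTerm d z p.2)
      (thetaChar c z * thetaChar d z) :=
  (summable_thetaCharTerm c hz).hasSum.mul (summable_thetaCharTerm d hz).hasSum <|
    summable_mul_of_summable_norm (summable_norm_iff.mpr (summable_thetaCharTerm c hz))
      (summable_norm_iff.mpr (summable_thetaCharTerm d hz))

lemma thetaCharTerm_add_mul_thetaCharTerm_sub (c d z : ℂ) (a b : ℤ) :
    thetaCharTerm c z (a + b) * thetaCharTerm d z (a - b) =
      thetaCharTerm ((c + d) / 2) (2 * z) a * thetaCharTerm ((c - d) / 2) (2 * z) b := by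
  simp only [thetaCharTerm, ← Complex.exp_add]
  congr 1
  push_cast
  ring

lemma thetaCharTerm_add_one (c z : ℂ) (n : ℤ) :
    thetaCharTerm c z (n + 1) = thetaCharTerm (c + 1) z n := by
  simp only [thetaCharTerm]
  push_cast
  ring_nf

lemma thetaChar_add_one (c z : ℂ) : thetaChar (c + 1) z = thetaChar c z := by
  simp only [thetaChar, ← thetaCharTerm_add_one]
  exact (Equiv.addRight 1).tsum_eq (thetaCharTerm c z)

lemma thetaChar_mul_thetaChar (c d : ℂ) {z : ℂ} (hz : 0 < z.im) :
    thetaChar c z * thetaChar d z =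
      thetaChar ((c + d) / 2) (2 * z) * thetaChar ((c - d) / 2) (2 * z) +
        thetaChar ((c + d + 1) / 2) (2 * z) * thetaChar ((c - d + 1) / 2) (2 * z) := by
  have h2z : 0 < (2 * z).im := by simpa using hz
  refine (hasSum_thetaCharTerm_mul_thetaCharTerm c d hz).unique
    (HasSum.of_parity_split ?_ ?_)
  · simpa only [thetaCharTerm_add_mul_thetaCharTerm_sub] using
      hasSum_thetaCharTerm_mul_thetaCharTerm _ _ h2z
  · simpa only [thetaCharTerm_add_one, thetaCharTerm_add_mul_thetaCharTerm_sub,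
      add_right_comm c 1 d, sub_add_eq_add_sub c d 1] using
      hasSum_thetaCharTerm_mul_thetaCharTerm ((c + 1 + d) / 2) ((c + 1 - d) / 2) h2z

lemma exp_pi_mul_I_mul_int_sq (n : ℤ) : cexp (π * I * (n : ℂ) ^ 2) = (-1 : ℂ) ^ n := by
  obtain ⟨k, hk⟩ := Int.even_mul_pred_self n
  have hsplit : π * I * (n : ℂ) ^ 2 = n * (π * I) + k * (2 * π * I) := by
    have : ((n * (n - 1) : ℤ) : ℂ) = ((k + k : ℤ) : ℂ) := congrArg _ hk
    push_cast at this
    linear_combination π * I * this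
  rw [hsplit, Complex.exp_add, Complex.exp_int_mul, Complex.exp_pi_mul_I,
    Complex.exp_int_mul_two_pi_mul_I, mul_one]

lemma thetaCharTerm_zero_add_one (z : ℂ) (n : ℤ) :
    thetaCharTerm 0 (z + 1) n = (-1 : ℂ) ^ n * thetaCharTerm 0 z n := by
  rw [thetaCharTerm, thetaCharTerm, ← exp_pi_mul_I_mul_int_sq, ← Complex.exp_add]
  ring_nf

lemma thetaChar_zero_add_two (z : ℂ) : thetaChar 0 (z + 2) = thetaChar 0 z := by
  refine tsum_congr fun n => ?_
  have h := thetaCharTerm_zero_add_one (z + 1) n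
  rw [thetaCharTerm_zero_add_one z n, ← mul_assoc, ← zpow_add₀ (by norm_num),
    Even.neg_one_zpow ⟨n, rfl⟩, one_mul, add_assoc, one_add_one_eq_two] at h
  exact h

lemma thetaChar_half_add_two (z : ℂ) :
    thetaChar (1 / 2) (z + 2) = I * thetaChar (1 / 2) z := by
  rw [thetaChar, thetaChar, ← tsum_mul_left]
  refine tsum_congr fun n => ?_
  have hsplit : π * I * ((n : ℂ) + 1 / 2) ^ 2 * (z + 2) =
      π * I * ((n : ℂ) + 1 / 2) ^ 2 * z + (n * (n + 1) : ℤ) * (2 * π * I) + π / 2 * I := by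
    push_cast
    ring
  rw [thetaCharTerm, thetaCharTerm, hsplit, Complex.exp_add, Complex.exp_add,
    Complex.exp_int_mul_two_pi_mul_I, Complex.exp_pi_div_two_mul_I, mul_one, mul_comm]

lemma thetaChar_zero_sq {z : ℂ} (hz : 0 < z.im) :
    thetaChar 0 z ^ 2 = thetaChar 0 (2 * z) ^ 2 + thetaChar (1 / 2) (2 * z) ^ 2 := by
  simpa [sq] using thetaChar_mul_thetaChar 0 0 hz

lemma thetaChar_half_sq {z : ℂ} (hz : 0 < z.im) :
    thetaChar (1 / 2) z ^ 2 = 2 * thetaChar 0 (2 * z) * thetaChar (1 / 2) (2 * z) := by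
  have h := thetaChar_mul_thetaChar (1 / 2) (1 / 2) hz
  have h1 : thetaChar 1 (2 * z) = thetaChar 0 (2 * z) := by
    simpa using thetaChar_add_one 0 (2 * z)
  norm_num at h
  rw [sq, h, h1]
  ring

lemma thetaChar_zero_add_one_sq {z : ℂ} (hz : 0 < z.im) :
    thetaChar 0 (z + 1) ^ 2 = thetaChar 0 (2 * z) ^ 2 - thetaChar (1 / 2) (2 * z) ^ 2 := by
  have h := thetaChar_zero_sq (z := z + 1) (by simpa using hz)
  rw [mul_add, mul_one, thetaChar_zero_add_two, thetaChar_half_add_two, mul_pow, I_sq] at h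
  linear_combination h

/-- Jacobi's identity `Θ₀₁(z)⁴ + Θ₁₀(z)⁴ = Θ₀₀(z)⁴` on the upper half plane. -/
theorem stmt_1 (z : ℂ) (hz : 0 < z.im) :
    (∑' n : ℤ, (-1 : ℂ) ^ n * Complex.exp (Real.pi * Complex.I * (n : ℂ) ^ 2 * z)) ^ 4 +
      (∑' n : ℤ, Complex.exp (Real.pi * Complex.I * ((n : ℂ) + 1 / 2) ^ 2 * z)) ^ 4 =
    (∑' n : ℤ, Complex.exp (Real.pi * Complex.I * (n : ℂ) ^ 2 * z)) ^ 4 := by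
  have h00 : ∑' n : ℤ, cexp (π * I * (n : ℂ) ^ 2 * z) = thetaChar 0 z := by
    simp only [thetaChar, thetaCharTerm, add_zero]
  have h01 : ∑' n : ℤ, (-1 : ℂ) ^ n * cexp (π * I * (n : ℂ) ^ 2 * z) = thetaChar 0 (z + 1) := by
    simp only [thetaChar, thetaCharTerm_zero_add_one]
    simp only [thetaCharTerm, add_zero]
  rw [h00, h01]
  change thetaChar 0 (z + 1) ^ 4 + thetaChar (1 / 2) z ^ 4 = thetaChar 0 z ^ 4
  have pow_four : ∀ w : ℂ, w ^ 4 = (w ^ 2) ^ 2 := fun w => by ring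
  rw [pow_four, pow_four, pow_four, thetaChar_zero_add_one_sq hz, thetaChar_half_sq hz,
    thetaChar_zero_sq hz]
  ring
end

section
/- Let φ be a function on the upper half plane that is periodic with period 1 and satisfies z⁸φ(−1/z) = φ(z) + φ₁(z)/z + φ₂(z)/z², where φ₁ and φ₂ are also periodic with period 1, so that φ₂(z±1) = φ₂(z), φ₁(z±1) = φ₁(z), φ(z±1) = φ(z). Then for all z in the upper half plane, φ(−1/(z+1))·(z+1)¹⁰ − 2·φ(−1/z)·z¹⁰ + φ(−1/(z−1))·(z−1)¹⁰ = 2φ(z). -/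
/-- The second-difference identity for a 1-periodic quasimodular form of weight `-8`
and depth `2`. -/
theorem stmt_15 (φ φ₁ φ₂ : ℂ → ℂ)
    (hper : ∀ z : ℂ, 0 < z.im → φ (z + 1) = φ z ∧ φ (z - 1) = φ z)
    (hper1 : ∀ z : ℂ, 0 < z.im → φ₁ (z + 1) = φ₁ z ∧ φ₁ (z - 1) = φ₁ z)
    (hper2 : ∀ z : ℂ, 0 < z.im → φ₂ (z + 1) = φ₂ z ∧ φ₂ (z - 1) = φ₂ z)
    (hqm : ∀ z : ℂ, 0 < z.im → z ^ 8 * φ (-1 / z) = φ z + φ₁ z / z + φ₂ z / z ^ 2) :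
    ∀ z : ℂ, 0 < z.im →
      φ (-1 / (z + 1)) * (z + 1) ^ 10 - 2 * φ (-1 / z) * z ^ 10 +
        φ (-1 / (z - 1)) * (z - 1) ^ 10 = 2 * φ z := by
  have key : ∀ w : ℂ, 0 < w.im →
      φ (-1 / w) * w ^ 10 = w ^ 2 * φ w + w * φ₁ w + φ₂ w := by
    intro w hw
    have hw0 : w ≠ 0 := fun h => by simp [h] at hw
    rw [show φ (-1 / w) * w ^ 10 = w ^ 8 * φ (-1 / w) * w ^ 2 by ring, hqm w hw]
    field_simp
  intro z hz
  have hz1 : (0:ℝ) < (z + 1).im := by simpa using hz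
  have hz2 : (0:ℝ) < (z - 1).im := by simpa using hz
  rw [show (2:ℂ) * φ (-1 / z) * z ^ 10 = 2 * (φ (-1 / z) * z ^ 10) by ring,
    key _ hz1, key _ hz, key _ hz2, (hper z hz).1, (hper z hz).2,
    (hper1 z hz).1, (hper1 z hz).2, (hper2 z hz).1, (hper2 z hz).2]
  ring
end

section
/- Suppose the −1 Fourier eigenfunction b satisfies, for all r ≥ 0, b(r) = −4i·sin(πr²/2)²·(2/(π(r²−4)) − 464/(π(r²−2)) + 172128/(πr²) + I(r)), where I is analytic on a neighborhood of [0,∞). Then b(√(2k)) = 0 for every integer k ≥ 3, and each such root is of order at least 2; moreover b(0) = b(√2) = 0, b′(√2) = 928πi√2, and b′(2) = −8πi. -/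
/-!
`sin (π r² / 2) ^ 2` has a double zero at every `r` with `r² ∈ 2ℕ`, so `b` vanishes there,
and to second order wherever the remaining factor is differentiable. At the simple poles
`r² = 2m` of the rational part, a pole term `c / (π (r² - 2m))` turns the product into
`c / π · ψ (r² - 2m)` with `ψ u = sin (π u / 2) ^ 2 / u`, because `sin (π t / 2) ^ 2` has
period `2`. Since `ψ' 0 = π² / 4`, the chain rule gives the contribution `-2π i c x` to `b' x`.
-/

open Real Filter Topology

lemma hasDerivAt_sin_sq_div_self_zero :
    HasDerivAt (fun u : ℝ => sin (π * u / 2) ^ 2 / u) (π ^ 2 / 4) 0 := by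
  have hsin : HasDerivAt (fun u : ℝ => sin (π * u / 2)) (π / 2) 0 := by
    simpa using ((hasDerivAt_id (0 : ℝ)).const_mul π).div_const 2 |>.sin
  rw [hasDerivAt_iff_tendsto_slope]
  have hslope : slope (fun u : ℝ => sin (π * u / 2) ^ 2 / u) 0
      = fun u => slope (fun u : ℝ => sin (π * u / 2)) 0 u ^ 2 := by
    funext u
    simp [slope_def_field, pow_two, div_mul_div_comm, div_div]
  rw [hslope]
  convert (hasDerivAt_iff_tendsto_slope.1 hsin).pow 2 using 2
  ring

lemma sin_sq_add_two_mul_nat (t : ℝ) (m : ℕ) :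
    sin (π * (t + 2 * m) / 2) ^ 2 = sin (π * t / 2) ^ 2 := by
  rw [show π * (t + 2 * m) / 2 = π * t / 2 + m * π by ring, sin_add_nat_mul_pi, mul_pow,
    ← pow_mul, mul_comm m 2, pow_mul, neg_one_sq, one_pow, one_mul]

lemma hasDerivAt_sin_sq_div_sub {x : ℝ} (m : ℕ) (hx : x ^ 2 = 2 * m) :
    HasDerivAt (fun r : ℝ => sin (π * r ^ 2 / 2) ^ 2 / (r ^ 2 - 2 * m)) (π ^ 2 * x / 2) x := by
  have hinner : HasDerivAt (fun r : ℝ => r ^ 2 - 2 * m) (2 * x) x := by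
    simpa using (hasDerivAt_pow 2 x).sub_const (2 * (m : ℝ))
  have hψ : HasDerivAt (fun u : ℝ => sin (π * u / 2) ^ 2 / u) (π ^ 2 / 4) (x ^ 2 - 2 * m) := by
    rw [hx, sub_self]
    exact hasDerivAt_sin_sq_div_self_zero
  have hshift : (fun r : ℝ => sin (π * r ^ 2 / 2) ^ 2 / (r ^ 2 - 2 * m))
      = (fun u : ℝ => sin (π * u / 2) ^ 2 / u) ∘ (fun r : ℝ => r ^ 2 - 2 * m) := by
    funext r
    rw [Function.comp_apply, ← sin_sq_add_two_mul_nat (r ^ 2 - 2 * m) m, sub_add_cancel]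
  rw [hshift]
  exact (hψ.comp x hinner).congr_deriv (by ring)

lemma hasDerivAt_mul_sq_mul_of_eq_zero {𝕜 𝔸 : Type*} [NontriviallyNormedField 𝕜]
    [NormedCommRing 𝔸] [NormedAlgebra 𝕜 𝔸] {f G : 𝕜 → 𝔸} {x : 𝕜} (c : 𝔸)
    (hf : DifferentiableAt 𝕜 f x) (hfx : f x = 0) (hG : DifferentiableAt 𝕜 G x) :
    HasDerivAt (fun r => c * f r ^ 2 * G r) 0 x := by
  simpa [hfx] using ((hf.hasDerivAt.fun_pow 2).const_mul c).fun_mul hG.hasDerivAt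

noncomputable def sinSqMul (G : ℝ → ℂ) (r : ℝ) : ℂ :=
  -4 * Complex.I * Complex.sin ((π * r ^ 2 / 2 : ℝ) : ℂ) ^ 2 * G r

lemma sin_pi_mul_sq_div_two_eq_zero {x : ℝ} (m : ℕ) (hx : x ^ 2 = 2 * m) :
    Complex.sin ((π * x ^ 2 / 2 : ℝ) : ℂ) = 0 := by
  rw [← Complex.ofReal_sin, hx, show π * (2 * m) / 2 = m * π by ring, sin_nat_mul_pi,
    Complex.ofReal_zero]

lemma sinSqMul_eq_zero (G : ℝ → ℂ) {x : ℝ} (m : ℕ) (hx : x ^ 2 = 2 * m) :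
    sinSqMul G x = 0 := by
  rw [sinSqMul, sin_pi_mul_sq_div_two_eq_zero m hx]
  ring

lemma hasDerivAt_sinSqMul_of_differentiableAt {G : ℝ → ℂ} {x : ℝ} (m : ℕ)
    (hx : x ^ 2 = 2 * m) (hG : DifferentiableAt ℝ G x) : HasDerivAt (sinSqMul G) 0 x :=
  hasDerivAt_mul_sq_mul_of_eq_zero _ (by fun_prop) (sin_pi_mul_sq_div_two_eq_zero m hx) hG

lemma hasDerivAt_sinSqMul_simple_pole {G : ℝ → ℂ} {x : ℝ} (m : ℕ) (hx : x ^ 2 = 2 * m)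
    (c : ℝ) (hG : DifferentiableAt ℝ G x) :
    HasDerivAt (sinSqMul fun r => ((c / (π * (r ^ 2 - 2 * m)) : ℝ) : ℂ) + G r)
      (-2 * π * Complex.I * c * x) x := by
  have hsplit : (sinSqMul fun r => ((c / (π * (r ^ 2 - 2 * m)) : ℝ) : ℂ) + G r)
      = fun r => sinSqMul G r + -4 * Complex.I * c / π *
          ((sin (π * r ^ 2 / 2) ^ 2 / (r ^ 2 - 2 * m) : ℝ) : ℂ) := by
    funext r
    simp only [sinSqMul]
    push_cast
    field_simp
    ring
  rw [hsplit]
  refine ((hasDerivAt_sinSqMul_of_differentiableAt m hx hG).fun_add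
    ((hasDerivAt_sin_sq_div_sub m hx).ofReal_comp.const_mul (-4 * Complex.I * c / π))
    ).congr_deriv ?_
  push_cast
  field_simp
  ring

attribute [fun_prop] Complex.differentiable_ofReal

/-- Roots and special values of the `-1` eigenfunction `b`. -/
theorem stmt_19 (b g : ℝ → ℂ)
    (hg : ∀ x : ℝ, 0 ≤ x → AnalyticAt ℝ g x)
    (hb : ∀ r : ℝ, 0 ≤ r →
      b r = -4 * Complex.I * Complex.sin ((π * r ^ 2 / 2 : ℝ) : ℂ) ^ 2 *
        (((2 / (π * (r ^ 2 - 4)) - 464 / (π * (r ^ 2 - 2)) + 172128 / (π * r ^ 2) : ℝ)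
          : ℂ) + g r)) :
    (∀ k : ℕ, 3 ≤ k →
      b (Real.sqrt (2 * k)) = 0 ∧ deriv b (Real.sqrt (2 * k)) = 0) ∧
    b 0 = 0 ∧ b (Real.sqrt 2) = 0 ∧ b 2 = 0 ∧
    deriv b (Real.sqrt 2) = 928 * (π : ℂ) * Complex.I * (Real.sqrt 2 : ℝ) ∧
    deriv b 2 = -8 * (π : ℂ) * Complex.I := by
  set G : ℝ → ℂ := fun r => ((2 / (π * (r ^ 2 - 4)) - 464 / (π * (r ^ 2 - 2))
    + 172128 / (π * r ^ 2) : ℝ) : ℂ) + g r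
  have hbG : ∀ r, 0 ≤ r → b r = sinSqMul G r := hb
  have hval : ∀ {x : ℝ} (m : ℕ), 0 ≤ x → x ^ 2 = 2 * m → b x = 0 := fun m hx hxm =>
    (hbG _ hx).trans (sinSqMul_eq_zero G m hxm)
  have hderiv : ∀ {x : ℝ}, 0 < x → deriv b x = deriv (sinSqMul G) x := fun hx =>
    EventuallyEq.deriv_eq (by filter_upwards [eventually_gt_nhds hx] with r hr using hbG r hr.le)
  have hg' : ∀ {x : ℝ}, 0 < x → DifferentiableAt ℝ g x := fun hx =>
    (hg _ hx.le).differentiableAt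
  have hsqrt2 : √2 ^ 2 = 2 * ((1 : ℕ) : ℝ) := by simp
  refine ⟨fun k hk => ?_, hval 0 le_rfl (by simp), hval 1 (sqrt_nonneg _) hsqrt2,
    hval 2 zero_le_two (by norm_num), ?_, ?_⟩
  · have hk' : (3 : ℝ) ≤ k := by exact_mod_cast hk
    have hx : √(2 * k) ^ 2 = 2 * (k : ℝ) := sq_sqrt (by positivity)
    have hpos : 0 < √(2 * k) := sqrt_pos.2 (by positivity)
    have := hg' hpos
    refine ⟨hval k hpos.le hx, ?_⟩
    rw [hderiv hpos, (hasDerivAt_sinSqMul_of_differentiableAt k hx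
      (by fun_prop (disch := rw [hx]; nlinarith [pi_pos]))).deriv]
  · have hsplit : G = fun r => ((-464 / (π * (r ^ 2 - 2 * ((1 : ℕ) : ℝ))) : ℝ) : ℂ)
        + (((2 / (π * (r ^ 2 - 4)) + 172128 / (π * r ^ 2) : ℝ) : ℂ) + g r) := by
      funext r; simp only [G]; push_cast; ring
    have hpos : 0 < √2 := by positivity
    have := hg' hpos
    rw [hderiv hpos, hsplit, (hasDerivAt_sinSqMul_simple_pole 1 hsqrt2 (-464)
      (by fun_prop (disch := rw [hsqrt2]; norm_num [pi_ne_zero]))).deriv]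
    push_cast
    ring
  · have hsplit : G = fun r => ((2 / (π * (r ^ 2 - 2 * ((2 : ℕ) : ℝ))) : ℝ) : ℂ)
        + (((-464 / (π * (r ^ 2 - 2)) + 172128 / (π * r ^ 2) : ℝ) : ℂ) + g r) := by
      funext r; simp only [G]; push_cast; ring
    have := hg' two_pos
    rw [hderiv two_pos, hsplit, (hasDerivAt_sinSqMul_simple_pole 2 (by norm_num) 2
      (by fun_prop (disch := norm_num [pi_ne_zero]))).deriv]
    push_cast
    ring
end
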